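/- arXiv:2306.11517 — 6 statements merged into one kernel-verified Lean document; each statement's English description precedes it below -/
import Mathlib

section
/- Let G be a subgroup of orientation-preserving circle homeomorphisms such that every non-trivial element has at most N fixed points, for a fixed natural number N. If G preserves an atomless Borel probability measure on the circle, then the rotation number homomorphism rot: G → ℝ/ℤ is injective; in particular, G is abelian and isomorphic to a subgroup of SO(2). -/
open MeasureTheory

instance : Fact ((0:ℝ) < 1) := ⟨one_pos⟩

abbrev S1 : Type := AddCircle (1:ℝ)

noncomputable instance : Group (S1 ≃ₜ S1) where
  mul f g := g.trans f
  one := Homeomorph.refl S1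
  inv := Homeomorph.symm
  mul_assoc f g h := by ext x; rfl
  one_mul f := by ext x; rfl
  mul_one f := by ext x; rfl
  inv_mul_cancel f := by ext x; exact f.symm_apply_apply x

/-- The positively oriented half-open arc `[x, y)` in the circle. -/
noncomputable def arc (x y : S1) : Set S1 :=
  (fun t : ℝ => x + (t : S1)) '' Set.Ico (0 : ℝ)
    ((AddCircle.equivIco 1 0 (y - x) : Set.Ico (0:ℝ) (0+1)) : ℝ)

/-- The topological support of a measure on the circle. -/
def mSupport (μ : Measure S1) : Set S1 :=
  {x | ∀ U : Set S1, IsOpen U → x ∈ U → μ U ≠ 0}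

/-- The rotation number of `g` computed at the basepoint `x` with respect to `μ`. -/
noncomputable def rotAt (μ : Measure S1) (x : S1) (g : S1 ≃ₜ S1) : S1 :=
  ((μ (arc x (g x))).toReal : S1)

/-- A circle homeomorphism is orientation-preserving if it admits a strictly
monotone lift commuting with integer translations. -/
def OrientationPreserving (g : S1 ≃ₜ S1) : Prop :=
  ∃ F : ℝ → ℝ, StrictMono F ∧ (∀ x : ℝ, F (x + 1) = F x + 1) ∧
    ∀ x : ℝ, g (x : S1) = ((F x : ℝ) : S1)

namespace Aux1

noncomputable def rep (z : S1) : ℝ :=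
  ((AddCircle.equivIco 1 0 z : Set.Ico (0:ℝ) (0+1)) : ℝ)

lemma rep_mem (z : S1) : rep z ∈ Set.Ico (0:ℝ) 1 := by
  have := (AddCircle.equivIco 1 0 z).2
  simpa [rep] using this

lemma coe_rep (z : S1) : ((rep z : ℝ) : S1) = z :=
  (AddCircle.equivIco (1:ℝ) 0).symm_apply_apply z

lemma rep_coe {r : ℝ} (h0 : 0 ≤ r) (h1 : r < 1) : rep ((r : ℝ) : S1) = r := by
  simp only [rep, AddCircle.equivIco, QuotientAddGroup.equivIcoMod_coe]
  exact (toIcoMod_eq_self one_pos).2 ⟨by simpa using h0, by simpa using h1⟩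

lemma coe_int_add (t : ℝ) (n : ℤ) : ((t + n : ℝ) : S1) = (t : S1) := by
  have : ((n : ℝ) : S1) = 0 := by
    rw [AddCircle.coe_eq_zero_iff]; exact ⟨n, by simp⟩
  have h2 : ((t + n : ℝ) : S1) = (t : S1) + ((n:ℝ) : S1) := rfl
  rw [h2, this, add_zero]

/-- basic arc in lift coordinates -/
noncomputable def A (u v : ℝ) : Set S1 := (fun t : ℝ => (t : S1)) '' Set.Ico u v

lemma A_shift (u v : ℝ) (n : ℤ) : A (u + n) (v + n) = A u v := by
  have : Set.Ico (u + (n:ℝ)) (v + n) = (fun t : ℝ => t + n) '' Set.Ico u v := by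
    rw [Set.image_add_const_Ico]
  rw [A, this, ← Set.image_comp]
  refine Set.image_congr fun t _ => ?_
  exact coe_int_add t n

lemma A_univ (u : ℝ) : A u (u + 1) = Set.univ := AddCircle.coe_image_Ico_eq _ _

lemma mem_A_iff {u v : ℝ} (h2 : v ≤ u + 1) (z : S1) :
    z ∈ A u v ↔ ((AddCircle.equivIco 1 u z : Set.Ico u (u+1)) : ℝ) < v := by
  constructor
  · rintro ⟨t, ht, rfl⟩
    have htm : t ∈ Set.Ico u (u + 1) := ⟨ht.1, lt_of_lt_of_le ht.2 h2⟩
    have : ((AddCircle.equivIco 1 u (t : S1) : Set.Ico u (u+1)) : ℝ) = t := by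
      simp only [AddCircle.equivIco, QuotientAddGroup.equivIcoMod_coe]
      exact (toIcoMod_eq_self one_pos).2 htm
    rw [this]; exact ht.2
  · intro h
    set t : ℝ := ((AddCircle.equivIco 1 u z : Set.Ico u (u+1)) : ℝ) with htdef
    have htm := (AddCircle.equivIco 1 u z).2
    refine ⟨t, ⟨htm.1, h⟩, ?_⟩
    exact (AddCircle.equivIco (1:ℝ) u).symm_apply_apply z

lemma A_measurable {u v : ℝ} (h2 : v ≤ u + 1) : MeasurableSet (A u v) := by
  have : A u v = (fun z : S1 => ((AddCircle.equivIco 1 u z : Set.Ico u (u+1)) : ℝ)) ⁻¹' Set.Iio v := by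
    ext z; simpa [Set.mem_preimage] using mem_A_iff h2 z
  rw [this]
  exact (measurable_subtype_coe.comp (AddCircle.measurableEquivIco 1 u).measurable)
    measurableSet_Iio

lemma A_union {u v w : ℝ} (h1 : u ≤ v) (h2 : v ≤ w) : A u w = A u v ∪ A v w := by
  rw [A, A, A, ← Set.image_union, Set.Ico_union_Ico_eq_Ico h1 h2]

lemma A_disj {u v w : ℝ} (h3 : w ≤ u + 1) : Disjoint (A u v) (A v w) := by
  rw [Set.disjoint_left]
  rintro z ⟨s, hs, rfl⟩ ⟨t, ht, hst⟩
  have hsm : s ∈ Set.Ico u (u + 1) := ⟨hs.1, lt_of_lt_of_le hs.2 (le_trans ht.1 (le_trans (le_of_lt ht.2) h3))⟩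
  have htm : t ∈ Set.Ico u (u + 1) := ⟨le_trans hs.1 (le_trans (le_of_lt hs.2) ht.1), lt_of_lt_of_le ht.2 h3⟩
  have : t = s := (AddCircle.coe_eq_coe_iff_of_mem_Ico (by simpa using htm) (by simpa using hsm)).1 hst
  exact absurd (this ▸ ht.1) (not_le.2 hs.2)

lemma measure_A_add (μ : Measure S1) {u v w : ℝ} (h1 : u ≤ v) (h2 : v ≤ w) (h3 : w ≤ u + 1) :
    μ (A u v) + μ (A v w) = μ (A u w) := by
  rw [A_union h1 h2, measure_union (A_disj h3) (A_measurable (by linarith))]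

lemma measure_A_full (μ : Measure S1) [IsProbabilityMeasure μ] (u : ℝ) :
    μ (A u (u + 1)) = 1 := by rw [A_univ]; exact measure_univ



lemma arc_eq_A (a : ℝ) (b : S1) : arc (a : S1) b = A a (a + rep (b - (a:S1))) := by
  have h1 : arc (a : S1) b
      = (fun t : ℝ => ((a : ℝ) : S1) + (t : S1)) '' Set.Ico 0 (rep (b - (a:S1))) := rfl
  have h2 : (fun t : ℝ => ((a : ℝ) : S1) + (t : S1))
      = (fun t : ℝ => (t : S1)) ∘ (fun t : ℝ => a + t) := rfl
  rw [h1, h2, Set.image_comp, Set.image_const_add_Ico, add_zero, A]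

lemma rep_sub_coe {a r : ℝ} (b : S1) (h : b = ((a + r : ℝ) : S1)) (h0 : 0 ≤ r) (h1 : r < 1) :
    rep (b - (a : S1)) = r := by
  have : b - (a : S1) = ((r : ℝ) : S1) := by
    rw [h, show ((a + r : ℝ) : S1) = (a : S1) + (r : S1) from rfl]
    abel
  rw [this, rep_coe h0 h1]

lemma arc_eq_A' {a r : ℝ} (b : S1) (h : b = ((a + r : ℝ) : S1)) (h0 : 0 ≤ r) (h1 : r < 1) :
    arc (a : S1) b = A a (a + r) := by
  rw [arc_eq_A, rep_sub_coe b h h0 h1]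

lemma op_image {g : S1 ≃ₜ S1} (F : ℝ → ℝ) (hF : StrictMono F)
    (hF1 : ∀ x : ℝ, F (x + 1) = F x + 1) (hFg : ∀ t : ℝ, g (t : S1) = ((F t : ℝ) : S1))
    {u v : ℝ} (h1 : u ≤ v) (h2 : v ≤ u + 1) : ⇑g '' A u v = A (F u) (F v) := by
  ext z; constructor
  · rintro ⟨w, ⟨t, ht, rfl⟩, rfl⟩
    exact ⟨F t, ⟨hF.le_iff_le.2 ht.1, hF.lt_iff_lt.2 ht.2⟩, (hFg t).symm⟩
  · rintro ⟨y, hy, rfl⟩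
    obtain ⟨s, hs, hgs⟩ : ∃ s ∈ Set.Ico u (u + 1), ((s:ℝ):S1) = g.symm ((y:ℝ):S1) := by
      have := AddCircle.coe_image_Ico_eq (1:ℝ) u
      have hmem : g.symm ((y:ℝ):S1) ∈ ((fun t : ℝ => (t : S1)) '' Set.Ico u (u+1)) := by
        rw [this]; trivial
      obtain ⟨s, hs, h⟩ := hmem; exact ⟨s, hs, h⟩
    have hgy : g ((s:ℝ):S1) = ((y:ℝ):S1) := by rw [hgs]; exact g.apply_symm_apply _
    have hcoe : ((F s : ℝ) : S1) = ((y:ℝ):S1) := by rw [← hFg s]; exact hgy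
    have hFs : F s ∈ Set.Ico (F u) (F u + 1) := by
      refine ⟨hF.le_iff_le.2 hs.1, ?_⟩
      have := hF.lt_iff_lt.2 hs.2
      rwa [hF1 u] at this
    have hym : y ∈ Set.Ico (F u) (F u + 1) := by
      refine ⟨hy.1, lt_of_lt_of_le hy.2 ?_⟩
      have := hF.le_iff_le.2 h2
      rwa [hF1 u] at this
    have : F s = y := (AddCircle.coe_eq_coe_iff_of_mem_Ico hFs hym).1 hcoe
    have hsv : s < v := hF.lt_iff_lt.1 (this ▸ hy.2)
    exact ⟨((s:ℝ):S1), ⟨s, ⟨hs.1, hsv⟩, rfl⟩, hgy⟩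



lemma coe_split (a r : ℝ) : ((a + r : ℝ) : S1) = ((a:ℝ):S1) + ((r:ℝ):S1) := rfl

lemma arc_base (a₀ : ℝ) (b : S1) : arc ((a₀:ℝ):S1) b = A a₀ (a₀ + rep (b - ((a₀:ℝ):S1))) :=
  arc_eq_A a₀ b

lemma coe_lift (a₀ : ℝ) (z : S1) : z = ((a₀ + rep (z - ((a₀:ℝ):S1)) : ℝ) : S1) := by
  rw [coe_split, coe_rep]; abel

lemma arc_inv (μ : Measure S1) {g : S1 ≃ₜ S1} (hg : OrientationPreserving g)
    (hinvg : ∀ s : Set S1, μ (⇑g '' s) = μ s) (a b : S1) :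
    μ (arc (g a) (g b)) = μ (arc a b) := by
  obtain ⟨F, hF, hF1, hFg⟩ := hg
  obtain ⟨a₀, rfl⟩ : ∃ t : ℝ, a = ((t:ℝ):S1) := ⟨rep a, (coe_rep a).symm⟩
  set r := rep (b - ((a₀:ℝ):S1)) with hr
  have hrm : r ∈ Set.Ico (0:ℝ) 1 := rep_mem _
  have hb : b = ((a₀ + r : ℝ):S1) := coe_lift a₀ b
  have harc : arc ((a₀:ℝ):S1) b = A a₀ (a₀ + r) := arc_eq_A' b hb hrm.1 hrm.2
  have hga : g ((a₀:ℝ):S1) = ((F a₀ : ℝ) : S1) := by rw [hFg]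
  have hgb : g b = ((F (a₀ + r) : ℝ) : S1) := by rw [hb, hFg]
  have hFr1 : F (a₀ + r) - F a₀ < 1 := by
    have h1 : F (a₀ + r) < F (a₀ + 1) := hF (by linarith [hrm.2])
    rw [hF1 a₀] at h1; linarith
  have hFr0 : 0 ≤ F (a₀ + r) - F a₀ := by
    have := hF.le_iff_le.2 (by linarith [hrm.1] : a₀ ≤ a₀ + r)
    linarith
  have harcg : arc (g ((a₀:ℝ):S1)) (g b) = A (F a₀) (F (a₀ + r)) := by
    rw [hga]
    have := arc_eq_A' (a := F a₀) (r := F (a₀ + r) - F a₀) (g b)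
      (by rw [hgb]; norm_num) hFr0 hFr1
    simpa using this
  rw [harcg, harc, ← op_image F hF hF1 hFg (by linarith [hrm.1]) (by linarith [hrm.2]),
    hinvg]

lemma arc_cocycle (μ : Measure S1) [IsProbabilityMeasure μ] (a b c : S1) :
    (((μ (arc a b)).toReal : ℝ) : S1) + (((μ (arc b c)).toReal : ℝ) : S1)
      = (((μ (arc a c)).toReal : ℝ) : S1) := by
  obtain ⟨a₀, rfl⟩ : ∃ t : ℝ, a = ((t:ℝ):S1) := ⟨rep a, (coe_rep a).symm⟩
  set β := rep (b - ((a₀:ℝ):S1)) with hβ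
  set γ := rep (c - ((a₀:ℝ):S1)) with hγ
  have hβm : β ∈ Set.Ico (0:ℝ) 1 := rep_mem _
  have hγm : γ ∈ Set.Ico (0:ℝ) 1 := rep_mem _
  have hb : b = ((a₀ + β : ℝ):S1) := coe_lift a₀ b
  have hc : c = ((a₀ + γ : ℝ):S1) := coe_lift a₀ c
  set b₀ := a₀ + β with hb₀
  set δ := rep (c - b) with hδ
  have hδm : δ ∈ Set.Ico (0:ℝ) 1 := rep_mem _
  have hδ' : δ = rep (c - ((b₀:ℝ):S1)) := by rw [hδ, hb]
  have hc' : c = ((b₀ + δ : ℝ):S1) := by rw [hδ']; exact coe_lift b₀ c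
  have harcab : arc ((a₀:ℝ):S1) b = A a₀ b₀ := arc_eq_A' b hb hβm.1 hβm.2
  have harcbc : arc b c = A b₀ (b₀ + δ) := by
    rw [hb]
    exact arc_eq_A' c hc' hδm.1 hδm.2
  have harcac : arc ((a₀:ℝ):S1) c = A a₀ (a₀ + γ) := arc_eq_A' c hc hγm.1 hγm.2
  -- the integer discrepancy
  obtain ⟨n, hn⟩ : ∃ n : ℤ, (n:ℝ) = (b₀ + δ) - (a₀ + γ) := by
    have h0 : (((b₀ + δ : ℝ):S1)) - (((a₀ + γ : ℝ):S1)) = 0 := by rw [← hc', ← hc]; abel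
    have h1 : (((b₀ + δ) - (a₀ + γ) : ℝ) : S1) = 0 := by
      rw [show ((((b₀ + δ) - (a₀ + γ)) : ℝ) : S1) = (((b₀ + δ:ℝ)):S1) - (((a₀ + γ:ℝ)):S1) from rfl, h0]
    rw [AddCircle.coe_eq_zero_iff] at h1
    obtain ⟨n, hn⟩ := h1
    exact ⟨n, by simpa using hn⟩
  have hne : (n:ℝ) = β + δ - γ := by rw [hn, hb₀]; ring
  have hn01 : n = 0 ∨ n = 1 := by
    have h1 : (-1 : ℝ) < n := by rw [hne]; linarith [hβm.1, hδm.1, hγm.2]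
    have h2 : (n : ℝ) < 2 := by rw [hne]; linarith [hβm.2, hδm.2, hγm.1]
    have h1' : (-1 : ℤ) < n := by exact_mod_cast h1
    have h2' : n < 2 := by exact_mod_cast h2
    omega
  have hmab := measure_ne_top μ (arc ((a₀:ℝ):S1) b)
  have hmbc := measure_ne_top μ (arc b c)
  have hmac := measure_ne_top μ (arc ((a₀:ℝ):S1) c)
  rcases hn01 with h | h
  · -- exact additivity
    have hγe : γ = β + δ := by rw [h] at hne; push_cast at hne; linarith
    have hkey : μ (A a₀ b₀) + μ (A b₀ (b₀ + δ)) = μ (A a₀ (a₀ + γ)) := by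
      have := measure_A_add μ (by linarith [hβm.1] : a₀ ≤ b₀)
        (by linarith [hδm.1] : b₀ ≤ b₀ + δ)
        (by rw [hb₀]; linarith [hγm.2, hγe] : b₀ + δ ≤ a₀ + 1)
      rwa [show a₀ + γ = b₀ + δ by rw [hb₀]; linarith] 
    rw [harcab, harcbc, harcac]
    have hreal : (μ (A a₀ b₀)).toReal + (μ (A b₀ (b₀ + δ))).toReal
        = (μ (A a₀ (a₀ + γ))).toReal := by
      rw [← ENNReal.toReal_add (by rw [← harcab]; exact hmab) (by rw [← harcbc]; exact hmbc), hkey]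
    rw [show ((((μ (A a₀ b₀)).toReal : ℝ)) : S1) + (((μ (A b₀ (b₀ + δ))).toReal : ℝ) : S1)
      = ((((μ (A a₀ b₀)).toReal + (μ (A b₀ (b₀ + δ))).toReal : ℝ)) : S1) from rfl, hreal]
  · -- wrap-around case
    have hγe : γ = β + δ - 1 := by rw [h] at hne; push_cast at hne; linarith
    have hkey1 : μ (A b₀ (b₀ + δ)) = μ (A b₀ (a₀ + 1)) + μ (A (a₀ + 1) (b₀ + δ)) := by
      rw [measure_A_add μ (by rw [hb₀]; linarith [hβm.2] : b₀ ≤ a₀ + 1)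
        (by rw [hb₀]; linarith [hγm.1, hγe] : a₀ + 1 ≤ b₀ + δ)
        (by linarith [hδm.2] : b₀ + δ ≤ b₀ + 1)]
    have hshift : A (a₀ + 1) (b₀ + δ) = A a₀ (a₀ + γ) := by
      have h2 : b₀ + δ = (a₀ + γ) + 1 := by rw [hb₀]; linarith
      rw [h2]
      have := A_shift a₀ (a₀ + γ) 1
      simpa using this
    have hkey2 : μ (A a₀ b₀) + μ (A b₀ (a₀ + 1)) = 1 := by
      rw [measure_A_add μ (by linarith [hβm.1] : a₀ ≤ b₀)
        (by rw [hb₀]; linarith [hβm.2] : b₀ ≤ a₀ + 1) (le_refl _), measure_A_full]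
    -- pass to reals
    rw [harcab, harcbc, harcac]
    set m1 := (μ (A a₀ b₀)).toReal with hm1
    set m2 := (μ (A b₀ (b₀ + δ))).toReal with hm2
    set m3 := (μ (A a₀ (a₀ + γ))).toReal with hm3
    set m4 := (μ (A b₀ (a₀ + 1))).toReal with hm4
    have hne1 : μ (A b₀ (a₀ + 1)) ≠ ⊤ := measure_ne_top μ _
    have hne3 : μ (A a₀ (a₀ + γ)) ≠ ⊤ := by rw [← harcac]; exact hmac
    have e1 : m2 = m4 + m3 := by
      rw [hm2, hkey1, hshift, ENNReal.toReal_add hne1 hne3]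
    have e2 : m1 + m4 = 1 := by
      rw [hm1, hm4, ← ENNReal.toReal_add (by rw [← harcab]; exact hmab) hne1, hkey2]
      simp
    have e3 : m1 + m2 = 1 + m3 := by linarith
    rw [show (((m1 : ℝ)) : S1) + ((m2 : ℝ) : S1) = (((m1 + m2 : ℝ)) : S1) from rfl, e3,
      show (((1 + m3 : ℝ)) : S1) = (((1:ℝ)) : S1) + ((m3:ℝ) : S1) from rfl]
    rw [show (((1:ℝ)) : S1) = 0 from AddCircle.coe_period 1, zero_add]


lemma arc_self (x : S1) : arc x x = ∅ := by
  have h : rep (x - x) = 0 := by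
    rw [sub_self]
    have : ((0:ℝ):S1) = (0:S1) := rfl
    rw [← this, rep_coe le_rfl one_pos]
  have : arc x x = (fun t : ℝ => x + (t : S1)) '' Set.Ico 0 (rep (x - x)) := rfl
  rw [this, h]
  simp

lemma msupport_infinite (μ : Measure S1) [IsProbabilityMeasure μ] [NullSingletonClass μ] :
    (mSupport μ).Infinite := by
  by_contra hf
  rw [Set.not_infinite] at hf
  obtain ⟨B, hBc, -, hB⟩ := TopologicalSpace.exists_countable_basis S1
  have hsub : (mSupport μ)ᶜ ⊆ ⋃₀ {b ∈ B | μ b = 0} := by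
    intro z hz
    simp only [mSupport, Set.mem_compl_iff, Set.mem_setOf_eq] at hz
    push_neg at hz
    obtain ⟨U, hU, hzU, hμU⟩ := hz
    obtain ⟨b, hbB, hzb, hbU⟩ := hB.exists_subset_of_mem_open hzU hU
    exact ⟨b, ⟨hbB, le_antisymm (hμU ▸ measure_mono hbU) zero_le⟩, hzb⟩
  have h0 : μ (⋃₀ {b ∈ B | μ b = 0}) = 0 :=
    (measure_sUnion_null_iff (hBc.mono (Set.sep_subset _ _))).2 fun s hs => hs.2
  have h1 : μ (mSupport μ)ᶜ = 0 := measure_mono_null hsub h0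
  have h2 : μ (mSupport μ) = 0 := hf.measure_zero μ
  have h3 : (1:ENNReal) ≤ 0 := by
    calc (1:ENNReal) = μ Set.univ := measure_univ.symm
    _ = μ (mSupport μ ∪ (mSupport μ)ᶜ) := by rw [Set.union_compl_self]
    _ ≤ μ (mSupport μ) + μ (mSupport μ)ᶜ := measure_union_le _ _
    _ = 0 := by rw [h1, h2, add_zero]
  simp at h3

lemma fixes_support (μ : Measure S1) [IsProbabilityMeasure μ] [NullSingletonClass μ]
    {k : S1 ≃ₜ S1} (hk : OrientationPreserving k)
    (hkinv : ∀ s : Set S1, μ (⇑k '' s) = μ s)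
    (hrot : ∀ y : S1, (((μ (arc y (k y))).toReal : ℝ) : S1) = 0)
    {y : S1} (hy : y ∈ mSupport μ) : k y = y := by
  by_contra hne
  obtain ⟨y₀, rfl⟩ : ∃ t : ℝ, y = ((t:ℝ):S1) := ⟨rep y, (coe_rep y).symm⟩
  set y : S1 := ((y₀:ℝ):S1) with hydef
  set r₂ := rep (k y - y) with hr₂def
  have hr₂m : r₂ ∈ Set.Ico (0:ℝ) 1 := rep_mem _
  have hky : k y = ((y₀ + r₂ : ℝ):S1) := coe_lift y₀ (k y)
  have hr₂pos : 0 < r₂ := by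
    rcases lt_or_eq_of_le hr₂m.1 with h | h
    · exact h
    · exfalso; apply hne; rw [hky, ← h, add_zero]
  have harc1 : arc y (k y) = A y₀ (y₀ + r₂) := arc_eq_A' (k y) hky hr₂m.1 hr₂m.2
  -- the preimage point
  set z : S1 := k.symm y with hzdef
  have hkz : k z = y := k.apply_symm_apply y
  have hzne : z ≠ y := by
    intro h
    have h2 := congrArg k h
    rw [hkz] at h2
    exact hne h2.symm
  set r₃ := rep (y - z) with hr₃def
  have hr₃m : r₃ ∈ Set.Ico (0:ℝ) 1 := rep_mem _
  have hzco : z = ((y₀ - r₃ : ℝ):S1) := by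
    have h1 : ((r₃:ℝ):S1) = y - z := coe_rep _
    have h2 : ((y₀ - r₃ : ℝ):S1) = y - ((r₃:ℝ):S1) := by
      rw [show ((y₀ - r₃ : ℝ):S1) = ((y₀:ℝ):S1) - ((r₃:ℝ):S1) from rfl]
    rw [h2, h1]; abel
  have hr₃pos : 0 < r₃ := by
    rcases lt_or_eq_of_le hr₃m.1 with h | h
    · exact h
    · exfalso; apply hzne; rw [hzco, ← h, sub_zero]
  have harc2 : arc z y = A (y₀ - r₃) y₀ := by
    rw [hzco]
    have := arc_eq_A' (a := y₀ - r₃) (r := r₃) y (by rw [hydef]; norm_num) hr₃m.1 hr₃m.2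
    simpa using this
  have hmeq : μ (arc z y) = μ (arc y (k y)) := by
    have := arc_inv μ hk hkinv z y
    rw [hkz] at this
    exact this.symm
  -- the measure is 0 or 1
  set m := μ (arc y (k y)) with hmdef
  have hmne : m ≠ ⊤ := measure_ne_top μ _
  have hm01 : m = 0 ∨ m = 1 := by
    have h0 := hrot y
    rw [AddCircle.coe_eq_zero_iff] at h0
    obtain ⟨n, hn⟩ := h0
    have hn' : (n:ℝ) = m.toReal := by simpa using hn
    have htr0 : 0 ≤ m.toReal := ENNReal.toReal_nonneg
    have htr1 : m.toReal ≤ 1 := by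
      have : m ≤ 1 := prob_le_one
      simpa using ENNReal.toReal_mono (by simp) this
    have hc0 : (0:ℝ) ≤ (n:ℝ) := by rw [hn']; exact htr0
    have hc1 : (n:ℝ) ≤ 1 := by rw [hn']; exact htr1
    have hn0 : (0:ℤ) ≤ n := by exact_mod_cast hc0
    have hn1 : n ≤ 1 := by exact_mod_cast hc1
    have : n = 0 ∨ n = 1 := by omega
    rcases this with h | h
    · left
      have : m.toReal = 0 := by rw [← hn', h]; norm_num
      rcases (ENNReal.toReal_eq_zero_iff m).1 this with h' | h'
      · exact h'
      · exact absurd h' hmne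
    · right
      have : m.toReal = 1 := by rw [← hn', h]; norm_num
      exact (ENNReal.toReal_eq_one_iff m).1 this
  -- now case on m
  rcases hm01 with hm | hm
  · -- both adjacent arcs are null
    have h1 : μ (A y₀ (y₀ + r₂)) = 0 := by rw [← harc1]; exact hmdef.symm.trans hm
    have h2 : μ (A (y₀ - r₃) y₀) = 0 := by rw [← harc2]; exact hmeq.trans hm
    set U : Set S1 := (fun t : ℝ => (t : S1)) '' Set.Ioo (y₀ - r₃) (y₀ + r₂) with hU
    have hUopen : IsOpen U := by
      exact QuotientAddGroup.isOpenMap_coe _ isOpen_Ioo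
    have hyU : y ∈ U := ⟨y₀, ⟨by linarith, by linarith⟩, rfl⟩
    have hUsub : U ⊆ A (y₀ - r₃) y₀ ∪ A y₀ (y₀ + r₂) := by
      rw [← A_union (by linarith) (by linarith)]
      exact Set.image_mono Set.Ioo_subset_Ico_self
    have hμU : μ U = 0 := by
      refine le_antisymm ?_ zero_le
      calc μ U ≤ μ (A (y₀ - r₃) y₀ ∪ A y₀ (y₀ + r₂)) := measure_mono hUsub
      _ ≤ μ (A (y₀ - r₃) y₀) + μ (A y₀ (y₀ + r₂)) := measure_union_le _ _
      _ = 0 := by rw [h1, h2, add_zero]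
    exact hy U hUopen hyU hμU
  · -- both arcs have full measure; outer adjacent arcs are null
    have h1 : μ (A y₀ (y₀ + r₂)) = 1 := by rw [← harc1]; exact hmdef.symm.trans hm
    have h2 : μ (A (y₀ - r₃) y₀) = 1 := by rw [← harc2]; exact hmeq.trans hm
    have hc1 : μ (A (y₀ + r₂) (y₀ + 1)) = 0 := by
      have hadd := measure_A_add μ (by linarith : y₀ ≤ y₀ + r₂)
        (by linarith [hr₂m.2] : y₀ + r₂ ≤ y₀ + 1) (le_refl _)
      rw [measure_A_full, h1] at hadd
      have : (1:ENNReal) + μ (A (y₀ + r₂) (y₀ + 1)) = 1 + 0 := by rw [add_zero]; exact hadd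
      exact (ENNReal.add_right_inj (by simp)).1 this
    have hc2 : μ (A y₀ (y₀ - r₃ + 1)) = 0 := by
      have hadd := measure_A_add μ (by linarith : y₀ - r₃ ≤ y₀)
        (by linarith [hr₃m.2] : y₀ ≤ y₀ - r₃ + 1) (le_refl _)
      rw [measure_A_full, h2] at hadd
      have : (1:ENNReal) + μ (A y₀ (y₀ - r₃ + 1)) = 1 + 0 := by rw [add_zero]; exact hadd
      exact (ENNReal.add_right_inj (by simp)).1 this
    have hshift : A (y₀ + r₂ - 1) y₀ = A (y₀ + r₂) (y₀ + 1) := by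
      have h := A_shift (y₀ + r₂ - 1) y₀ 1
      rw [show ((1:ℤ):ℝ) = (1:ℝ) by norm_num] at h
      rw [show y₀ + r₂ - 1 + 1 = y₀ + r₂ from by ring] at h
      exact h.symm
    have hc1' : μ (A (y₀ + r₂ - 1) y₀) = 0 := by rw [hshift]; exact hc1
    set U : Set S1 := (fun t : ℝ => (t : S1)) '' Set.Ioo (y₀ + r₂ - 1) (y₀ - r₃ + 1) with hU
    have hUopen : IsOpen U := QuotientAddGroup.isOpenMap_coe _ isOpen_Ioo
    have hyU : y ∈ U := ⟨y₀, ⟨by linarith [hr₂m.2], by linarith [hr₃m.2]⟩, rfl⟩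
    have hUsub : U ⊆ A (y₀ + r₂ - 1) y₀ ∪ A y₀ (y₀ - r₃ + 1) := by
      rw [← A_union (by linarith [hr₂m.2]) (by linarith [hr₃m.2])]
      exact Set.image_mono Set.Ioo_subset_Ico_self
    have hμU : μ U = 0 := by
      refine le_antisymm ?_ zero_le
      calc μ U ≤ μ (A (y₀ + r₂ - 1) y₀ ∪ A y₀ (y₀ - r₃ + 1)) := measure_mono hUsub
      _ ≤ μ (A (y₀ + r₂ - 1) y₀) + μ (A y₀ (y₀ - r₃ + 1)) := measure_union_le _ _
      _ = 0 := by rw [hc1', hc2, add_zero]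
    exact hy U hUopen hyU hμU


end Aux1

theorem stmt_1 (μ : Measure S1) [IsProbabilityMeasure μ] [NullSingletonClass μ]
    (G : Subgroup (S1 ≃ₜ S1))
    (hOP : ∀ g ∈ G, OrientationPreserving g)
    (hinv : ∀ g ∈ G, ∀ s : Set S1, μ (⇑g '' s) = μ s)
    (N : ℕ) (hfix : ∀ g ∈ G, g ≠ 1 → {z : S1 | g z = z}.encard ≤ (N : ℕ∞))
    (x : S1) (hx : x ∈ mSupport μ) :
    (∀ g ∈ G, ∀ h ∈ G, rotAt μ x g = rotAt μ x h → g = h) ∧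
    (∀ g ∈ G, ∀ h ∈ G, g * h = h * g) := by
  -- base-point independence
  have hbpi : ∀ g ∈ G, ∀ y z : S1,
      (((μ (arc y (g y))).toReal : ℝ) : S1) = (((μ (arc z (g z))).toReal : ℝ) : S1) := by
    intro g hg y z
    have h1 := Aux1.arc_cocycle μ y (g y) (g z)
    have h2 := Aux1.arc_cocycle μ y z (g z)
    have h3 : μ (arc (g y) (g z)) = μ (arc y z) := Aux1.arc_inv μ (hOP g hg) (hinv g hg) y z
    rw [h3] at h1
    have h4 := h1.trans h2.symm
    rw [add_comm ((((μ (arc y z)).toReal : ℝ)) : S1) _] at h2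
    have h5 : (((μ (arc y (g y))).toReal : ℝ) : S1) + (((μ (arc y z)).toReal : ℝ) : S1)
        = (((μ (arc z (g z))).toReal : ℝ) : S1) + (((μ (arc y z)).toReal : ℝ) : S1) :=
      h1.trans h2.symm
    exact add_right_cancel h5
  -- rotAt of the identity
  have hrotone : rotAt μ x 1 = 0 := by
    show (((μ (arc x ((1 : S1 ≃ₜ S1) x))).toReal : ℝ) : S1) = 0
    have h1 : (1 : S1 ≃ₜ S1) x = x := rfl
    rw [h1, Aux1.arc_self]
    simp
  -- rotAt is additive
  have hmul : ∀ g ∈ G, ∀ h ∈ G, rotAt μ x (g * h) = rotAt μ x g + rotAt μ x h := by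
    intro g hg h hh
    have hgh : (g * h) x = g (h x) := rfl
    show (((μ (arc x ((g * h) x))).toReal : ℝ) : S1) = _
    rw [hgh]
    have h1 := Aux1.arc_cocycle μ x (h x) (g (h x))
    have h2 := hbpi g hg (h x) x
    rw [h2] at h1
    rw [← h1]
    show _ = (((μ (arc x (g x))).toReal : ℝ) : S1) + (((μ (arc x (h x))).toReal : ℝ) : S1)
    rw [add_comm]
  -- the kernel of rot is trivial
  have hzero : ∀ k ∈ G, rotAt μ x k = 0 → k = 1 := by
    intro k hk h0
    by_contra hne
    have hsub : mSupport μ ⊆ {z : S1 | k z = z} := by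
      intro y hy
      refine Aux1.fixes_support μ (hOP k hk) (hinv k hk) (fun y' => ?_) hy
      have h1 := hbpi k hk y' x
      exact h1.trans h0
    have hinf : {z : S1 | k z = z}.Infinite := (Aux1.msupport_infinite μ).mono hsub
    have hle := hfix k hk hne
    rw [hinf.encard_eq] at hle
    simp at hle
  -- injectivity
  have hinj : ∀ g ∈ G, ∀ h ∈ G, rotAt μ x g = rotAt μ x h → g = h := by
    intro g hg h hh hr
    have hkG : g * h⁻¹ ∈ G := G.mul_mem hg (G.inv_mem hh)
    have hz : rotAt μ x (g * h⁻¹) = 0 := by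
      rw [hmul g hg h⁻¹ (G.inv_mem hh), hr]
      have h2 : rotAt μ x h + rotAt μ x h⁻¹ = 0 := by
        rw [← hmul h hh h⁻¹ (G.inv_mem hh), mul_inv_cancel]
        exact hrotone
      exact h2
    have := hzero _ hkG hz
    exact mul_inv_eq_one.1 this
  refine ⟨hinj, fun g hg h hh => ?_⟩
  have h1 : rotAt μ x (g * h) = rotAt μ x (h * g) := by
    rw [hmul g hg h hh, hmul h hh g hg, add_comm]
  exact hinj (g * h) (G.mul_mem hg hh) (h * g) (G.mul_mem hh hg) h1
end

section
/- Let G be a subgroup of orientation-preserving circle homeomorphisms in which every non-trivial element has at most 2 fixed points, and suppose G preserves a Borel probability measure whose support contains more than 2 points. Then G is abelian and the rotation number homomorphism rot: G → ℝ/ℤ is injective. -/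
open MeasureTheory

/-!
By invariance of `μ`, the mass of `[x, g x)` modulo 1 does not depend on `x`, and the
cocycle identity `μ[x, h x) + μ[h x, g h x) ≡ μ[x, g h x)` makes `rot` a homomorphism.
If `g` moves a point `y` of the support, then `[g⁻¹ y, y)` has the same mass as `[y, g y)`,
and their union either contains a neighbourhood of `y` or is the whole circle; either way
`[y, g y)` has positive mass, and symmetrically so has `[g y, y)`.
Hence `0 < μ[y, g y) < 1` and `rot g ≠ 0`. So the kernel of `rot` fixes the support,
which has more than two points, and is trivial; `G` embeds in `ℝ/ℤ` and is abelian.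
-/

noncomputable def rep (z : S1) : ℝ :=
  ((AddCircle.equivIco 1 0 z : Set.Ico (0:ℝ) (0+1)) : ℝ)

lemma rep_mem_Ico (z : S1) : rep z ∈ Set.Ico (0:ℝ) 1 := by
  simpa [rep] using (AddCircle.equivIco 1 0 z).2

lemma coe_rep (z : S1) : ((rep z : ℝ) : S1) = z :=
  AddCircle.coe_equivIco

lemma rep_coe (t : ℝ) : rep (t : S1) = Int.fract t := by
  simp [rep, AddCircle.coe_equivIco_mk_apply]

lemma rep_injective : Function.Injective rep :=
  Function.LeftInverse.injective coe_rep

lemma rep_zero : rep 0 = 0 := by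
  simpa using rep_coe 0

lemma rep_pos {z : S1} (hz : z ≠ 0) : 0 < rep z :=
  (rep_mem_Ico z).1.lt_of_ne fun h => rep_injective.ne hz (h.symm.trans rep_zero.symm)

lemma rep_coe_sub_coe {s t : ℝ} (h : t - s ∈ Set.Ico (0:ℝ) 1) :
    rep ((t : S1) - (s : S1)) = t - s := by
  rw [← AddCircle.coe_sub, rep_coe, Int.fract_eq_self.2 h]

lemma rep_sub (p q : S1) :
    rep (p - q) = if rep q ≤ rep p then rep p - rep q else rep p - rep q + 1 := by
  have hpq : p - q = ((rep p - rep q : ℝ) : S1) := by rw [AddCircle.coe_sub, coe_rep, coe_rep]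
  obtain ⟨hp0, hp1⟩ := rep_mem_Ico p
  obtain ⟨hq0, hq1⟩ := rep_mem_Ico q
  rw [hpq, rep_coe, Int.fract_eq_iff]
  split_ifs with h
  · exact ⟨by linarith, by linarith, 0, by simp⟩
  · exact ⟨by linarith, by linarith, -1, by simp⟩

lemma rep_sub_sub (a b z : S1) :
    rep (z - b) = if rep (b - a) ≤ rep (z - a) then rep (z - a) - rep (b - a)
      else rep (z - a) - rep (b - a) + 1 := by
  rw [← rep_sub, sub_sub_sub_cancel_right]

lemma mem_arc {a b z : S1} : z ∈ arc a b ↔ rep (z - a) < rep (b - a) := by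
  constructor
  · rintro ⟨t, ⟨ht0, ht⟩, rfl⟩
    have ht1 : t < 1 := ht.trans_le (rep_mem_Ico _).2.le
    rwa [add_sub_cancel_left, rep_coe, Int.fract_eq_self.2 ⟨ht0, ht1⟩]
  · intro h
    exact ⟨rep (z - a), ⟨(rep_mem_Ico _).1, h⟩, by simp only [coe_rep, add_sub_cancel]⟩

lemma arc_self (a : S1) : arc a a = ∅ :=
  Set.eq_empty_of_forall_notMem fun z hz => by
    rw [mem_arc, sub_self, rep_zero] at hz
    exact (rep_mem_Ico _).1.not_gt hz

lemma arc_eq_union {a b c : S1} (h : rep (b - a) ≤ rep (c - a)) :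
    arc a c = arc a b ∪ arc b c := by
  ext z
  rw [Set.mem_union, mem_arc, mem_arc, mem_arc, rep_sub_sub a b z, rep_sub_sub a b c, if_pos h]
  split_ifs with hz
  · constructor
    · intro; right; linarith
    · rintro (_ | _) <;> linarith
  · have := (rep_mem_Ico (z - a)).2
    constructor
    · intro; left; linarith
    · rintro (_ | _) <;> linarith

lemma disjoint_arc {a b c : S1} (h : rep (b - a) ≤ rep (c - a)) :
    Disjoint (arc a b) (arc b c) := by
  refine Set.disjoint_left.2 fun z hzab hzbc => ?_
  rw [mem_arc] at hzab hzbc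
  rw [rep_sub_sub a b z, rep_sub_sub a b c, if_pos h, if_neg (not_le.2 hzab)] at hzbc
  linarith [(rep_mem_Ico (z - a)).1, (rep_mem_Ico (c - a)).2]

lemma compl_arc {a b : S1} (hab : a ≠ b) : (arc a b)ᶜ = arc b a := by
  have hba : 0 < rep (b - a) := rep_pos (sub_ne_zero.2 hab.symm)
  have hab' : rep (a - b) = 1 - rep (b - a) := by
    rw [rep_sub_sub a b a, sub_self, rep_zero, if_neg (not_le.2 hba)]
    ring
  ext z
  rw [Set.mem_compl_iff, mem_arc, mem_arc, hab', rep_sub_sub a b z, not_lt]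
  obtain ⟨hz0, hz1⟩ := rep_mem_Ico (z - a)
  split_ifs with hz
  · exact ⟨fun _ => by linarith, fun _ => hz⟩
  · exact ⟨fun h => absurd h hz, fun _ => by linarith⟩

lemma measurableSet_arc (a b : S1) : MeasurableSet (arc a b) := by
  have hrep : Measurable rep :=
    measurable_subtype_coe.comp (AddCircle.measurableEquivIco (T := (1:ℝ)) 0).measurable
  simp_rw [Set.ext fun z => @mem_arc a b z]
  exact (hrep.comp (measurable_id.sub_const a)) measurableSet_Iio

lemma mem_interior_arc {a c y : S1} (h0 : 0 < rep (y - a)) (h1 : rep (y - a) < rep (c - a)) :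
    y ∈ interior (arc a c) := by
  have hopen : IsOpenMap fun t : ℝ => a + (t : S1) :=
    (Homeomorph.addLeft a).isOpenMap.comp QuotientAddGroup.isOpenMap_coe
  refine interior_maximal (Set.image_mono Set.Ioo_subset_Ico_self) (hopen _ isOpen_Ioo)
    ⟨rep (y - a), ⟨h0, h1⟩, ?_⟩
  simp only [coe_rep, add_sub_cancel]

lemma image_arc {g : S1 ≃ₜ S1} (hg : OrientationPreserving g) (a b : S1) :
    g '' arc a b = arc (g a) (g b) := by
  obtain ⟨F, hF, hF1, hgF⟩ := hg
  have hlift : ∀ z, rep (g z - g a) = F (rep a + rep (z - a)) - F (rep a) := by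
    intro z
    obtain ⟨h0, h1⟩ := rep_mem_Ico (z - a)
    have hz : g z = ((F (rep a + rep (z - a)) : ℝ) : S1) := by
      rw [← hgF, AddCircle.coe_add, coe_rep, coe_rep, add_sub_cancel]
    have ha : g a = ((F (rep a) : ℝ) : S1) := by rw [← hgF, coe_rep]
    have hlt : F (rep a + rep (z - a)) < F (rep a) + 1 := hF1 (rep a) ▸ hF (by linarith)
    rw [hz, ha, rep_coe_sub_coe ⟨sub_nonneg.2 (hF.monotone (by linarith)), by linarith⟩]
  ext w
  obtain ⟨z, rfl⟩ := g.surjective w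
  rw [g.injective.mem_set_image, mem_arc, mem_arc, hlift, hlift, sub_lt_sub_iff_right,
    hF.lt_iff_lt, add_lt_add_iff_left]

noncomputable def arcMass (μ : Measure S1) (a b : S1) : S1 :=
  ((μ.real (arc a b) : ℝ) : S1)

section Measure

variable {μ : Measure S1}

lemma measure_arc_apply {g : S1 ≃ₜ S1} (hg : OrientationPreserving g)
    (hinv : ∀ s : Set S1, μ (⇑g '' s) = μ s) (a b : S1) :
    μ (arc (g a) (g b)) = μ (arc a b) := by
  rw [← image_arc hg, hinv]

lemma rotAt_eq_arcMass (x : S1) (g : S1 ≃ₜ S1) : rotAt μ x g = arcMass μ x (g x) := rfl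

lemma arcMass_self (a : S1) : arcMass μ a a = 0 := by
  simp [arcMass, arc_self]

lemma arcMass_apply {g : S1 ≃ₜ S1} (hg : OrientationPreserving g)
    (hinv : ∀ s : Set S1, μ (⇑g '' s) = μ s) (a b : S1) :
    arcMass μ (g a) (g b) = arcMass μ a b := by
  simp only [arcMass, measureReal_def, measure_arc_apply hg hinv]

variable [IsProbabilityMeasure μ]

lemma measure_arc_union_arc_ne_zero {a b c : S1} (hb : b ∈ mSupport μ) (hab : a ≠ b)
    (hbc : b ≠ c) : μ (arc a b ∪ arc b c) ≠ 0 := by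
  rcases le_or_gt (rep (b - a)) (rep (c - a)) with h | h
  · rw [← arc_eq_union h]
    have hmem : b ∈ interior (arc a c) :=
      mem_interior_arc (rep_pos (sub_ne_zero.2 hab.symm))
        (h.lt_of_ne (rep_injective.ne (sub_left_injective.ne hbc)))
    exact fun h0 => hb _ isOpen_interior hmem (measure_mono_null interior_subset h0)
  · -- `c` lies in `[a, b)`, so `[a, b)` contains `[c, b)`, the complement of `[b, c)`.
    have hsub : (arc b c)ᶜ ⊆ arc a b := by
      rw [compl_arc hbc, arc_eq_union h.le]
      exact Set.subset_union_right
    have huniv : arc a b ∪ arc b c = Set.univ := by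
      rw [← Set.univ_subset_iff, ← Set.compl_union_self (arc b c)]
      exact Set.union_subset_union_left _ hsub
    simp [huniv]

lemma measureReal_arc_add_arc {a b : S1} (hab : a ≠ b) :
    μ.real (arc a b) + μ.real (arc b a) = 1 := by
  rw [← compl_arc hab, measureReal_add_measureReal_compl (measurableSet_arc a b), probReal_univ]

lemma measureReal_arc_eq_add {a b c : S1} (h : rep (b - a) ≤ rep (c - a)) :
    μ.real (arc a c) = μ.real (arc a b) + μ.real (arc b c) := by
  rw [arc_eq_union h, measureReal_union (disjoint_arc h) (measurableSet_arc b c)]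

lemma measure_arc_apply_ne_zero {g : S1 ≃ₜ S1} (hg : OrientationPreserving g)
    (hinv : ∀ s : Set S1, μ (⇑g '' s) = μ s) {y : S1} (hy : y ∈ mSupport μ) (hne : g y ≠ y) :
    μ (arc y (g y)) ≠ 0 ∧ μ (arc (g y) y) ≠ 0 := by
  have hne' : y ≠ g.symm y := fun h => hne (by rw [h, g.apply_symm_apply, ← h])
  have h1 : μ (arc (g.symm y) y) = μ (arc y (g y)) := by
    rw [← measure_arc_apply hg hinv, g.apply_symm_apply]
  have h2 : μ (arc y (g.symm y)) = μ (arc (g y) y) := by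
    rw [← measure_arc_apply hg hinv, g.apply_symm_apply]
  constructor
  · intro h0
    exact measure_arc_union_arc_ne_zero hy hne'.symm hne.symm (measure_union_null (h1 ▸ h0) h0)
  · intro h0
    exact measure_arc_union_arc_ne_zero hy hne hne' (measure_union_null h0 (h2 ▸ h0))

lemma arcMass_add_arcMass (a b c : S1) : arcMass μ a b + arcMass μ b c = arcMass μ a c := by
  rcases eq_or_ne b c with rfl | hbc
  · rw [arcMass_self, add_zero]
  simp only [arcMass, ← AddCircle.coe_add]
  rcases le_or_gt (rep (b - a)) (rep (c - a)) with h | h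
  · rw [measureReal_arc_eq_add h]
  · have hsum : μ.real (arc a b) + μ.real (arc b c) = μ.real (arc a c) + 1 := by
      linarith [measureReal_arc_eq_add (μ := μ) h.le, measureReal_arc_add_arc (μ := μ) hbc.symm]
    rw [hsum, AddCircle.coe_add_period]

lemma rotAt_eq_rotAt {g : S1 ≃ₜ S1} (hg : OrientationPreserving g)
    (hinv : ∀ s : Set S1, μ (⇑g '' s) = μ s) (x y : S1) : rotAt μ y g = rotAt μ x g := by
  simp only [rotAt_eq_arcMass]
  calc arcMass μ y (g y)
      = arcMass μ x (g x) + (arcMass μ y x + arcMass μ x y) := by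
        rw [← arcMass_add_arcMass y x, ← arcMass_add_arcMass x (g x), arcMass_apply hg hinv]
        abel
    _ = arcMass μ x (g x) := by rw [arcMass_add_arcMass, arcMass_self, add_zero]

lemma rotAt_mul {g : S1 ≃ₜ S1} (hg : OrientationPreserving g)
    (hinv : ∀ s : Set S1, μ (⇑g '' s) = μ s) (x : S1) (h : S1 ≃ₜ S1) :
    rotAt μ x (g * h) = rotAt μ x h + rotAt μ x g := by
  rw [← rotAt_eq_rotAt hg hinv x (h x)]
  exact (arcMass_add_arcMass x (h x) (g (h x))).symm

lemma rotAt_ne_zero_of_apply_ne {g : S1 ≃ₜ S1} (hg : OrientationPreserving g)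
    (hinv : ∀ s : Set S1, μ (⇑g '' s) = μ s) {y : S1} (hy : y ∈ mSupport μ) (hne : g y ≠ y) :
    rotAt μ y g ≠ 0 := by
  obtain ⟨h1, h2⟩ := measure_arc_apply_ne_zero hg hinv hy hne
  have hpos1 : 0 < μ.real (arc y (g y)) := ENNReal.toReal_pos h1 (measure_ne_top μ _)
  have hpos2 : 0 < μ.real (arc (g y) y) := ENNReal.toReal_pos h2 (measure_ne_top μ _)
  have hsum := measureReal_arc_add_arc (μ := μ) hne.symm
  intro h0
  have hrep : rep (rotAt μ y g) = μ.real (arc y (g y)) := by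
    rw [rotAt_eq_arcMass, arcMass, rep_coe, Int.fract_eq_self.2 ⟨hpos1.le, by linarith⟩]
  rw [h0, rep_zero] at hrep
  linarith

lemma mSupport_subset_fixedPoints {g : S1 ≃ₜ S1} (hg : OrientationPreserving g)
    (hinv : ∀ s : Set S1, μ (⇑g '' s) = μ s) {x : S1} (h0 : rotAt μ x g = 0) :
    mSupport μ ⊆ {z | g z = z} := fun y hy => by
  by_contra hne
  exact rotAt_ne_zero_of_apply_ne hg hinv hy hne (rotAt_eq_rotAt hg hinv x y ▸ h0)

end Measure

theorem stmt_2_general (μ : Measure S1) [IsProbabilityMeasure μ]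
    (G : Subgroup (S1 ≃ₜ S1))
    (hOP : ∀ g ∈ G, OrientationPreserving g)
    (hinv : ∀ g ∈ G, ∀ s : Set S1, μ (⇑g '' s) = μ s)
    (hfix : ∀ g ∈ G, g ≠ 1 → {z : S1 | g z = z}.encard ≤ 2)
    (hsupp : 2 < (mSupport μ).encard)
    (x : S1) :
    (∀ g ∈ G, ∀ h ∈ G, g * h = h * g) ∧
    (∀ g ∈ G, ∀ h ∈ G, rotAt μ x g = rotAt μ x h → g = h) := by
  have hmul : ∀ g ∈ G, ∀ h, rotAt μ x (g * h) = rotAt μ x h + rotAt μ x g :=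
    fun g hg => rotAt_mul (hOP g hg) (hinv g hg) x
  have hker : ∀ g ∈ G, rotAt μ x g = 0 → g = 1 := fun g hg h0 => by
    by_contra hne
    have hsub := mSupport_subset_fixedPoints (hOP g hg) (hinv g hg) h0
    exact hsupp.not_ge ((Set.encard_mono hsub).trans (hfix g hg hne))
  have hinj : ∀ g ∈ G, ∀ h ∈ G, rotAt μ x g = rotAt μ x h → g = h := by
    intro g hg h hh hgh
    have hk : g * h⁻¹ ∈ G := G.mul_mem hg (G.inv_mem hh)
    have hrot : rotAt μ x h + rotAt μ x (g * h⁻¹) = rotAt μ x h := by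
      rw [← hmul _ hk, inv_mul_cancel_right, hgh]
    exact mul_inv_eq_one.1 (hker _ hk (add_eq_left.1 hrot))
  refine ⟨fun g hg h hh => hinj _ (G.mul_mem hg hh) _ (G.mul_mem hh hg) ?_, hinj⟩
  rw [hmul g hg, hmul h hh, add_comm]

theorem stmt_2 (μ : Measure S1) [IsProbabilityMeasure μ]
    (G : Subgroup (S1 ≃ₜ S1))
    (hOP : ∀ g ∈ G, OrientationPreserving g)
    (hinv : ∀ g ∈ G, ∀ s : Set S1, μ (⇑g '' s) = μ s)
    (hfix : ∀ g ∈ G, g ≠ 1 → {z : S1 | g z = z}.encard ≤ 2)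
    (hsupp : 2 < (mSupport μ).encard)
    (x : S1) (hx : x ∈ mSupport μ) :
    (∀ g ∈ G, ∀ h ∈ G, g * h = h * g) ∧
    (∀ g ∈ G, ∀ h ∈ G, rotAt μ x g = rotAt μ x h → g = h) :=
  stmt_2_general μ G hOP hinv hfix hsupp x
end

section
/- The group ℤ² ⋊_A ℤ/2ℤ, where A is the automorphism of ℤ² swapping the two coordinates, is not isomorphic to ℤ² ⋊_{-id} ℤ/2ℤ, where -id is the automorphism negating both coordinates. -/
/-- `ℤ²` written multiplicatively. -/
abbrev Z2 : Type := Multiplicative (ℤ × ℤ)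

/-- The automorphism of `ℤ²` swapping the two coordinates. -/
def swapAut : MulAut Z2 := AddEquiv.toMultiplicative (AddEquiv.prodComm : ℤ × ℤ ≃+ ℤ × ℤ)

/-- The automorphism of `ℤ²` negating both coordinates. -/
def negAut : MulAut Z2 := AddEquiv.toMultiplicative (AddEquiv.neg (ℤ × ℤ))

lemma swapAut_sq : swapAut * swapAut = 1 := by
  ext x : 1
  simp [swapAut]

lemma negAut_sq : negAut * negAut = 1 := by
  ext x : 1
  simp [negAut]

/-- The action of `ℤ/2ℤ` on `ℤ²` generated by an involutive automorphism `e`. -/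
def involutionHom (e : MulAut Z2) (he : e * e = 1) :
    Multiplicative (ZMod 2) →* MulAut Z2 where
  toFun x := e ^ (Multiplicative.toAdd x).val
  map_one' := by
    show e ^ (0 : ZMod 2).val = 1
    simp
  map_mul' x y := by
    have he2 : e ^ 2 = 1 := by rw [sq]; exact he
    have key : ∀ n : ℕ, e ^ n = e ^ (n % 2) := by
      intro n
      conv_lhs => rw [← Nat.div_add_mod n 2]
      rw [pow_add, pow_mul, he2, one_pow, one_mul]
    show e ^ (Multiplicative.toAdd (x * y)).val =
      e ^ (Multiplicative.toAdd x).val * e ^ (Multiplicative.toAdd y).val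
    rw [← pow_add, key ((Multiplicative.toAdd (x * y)).val),
      key ((Multiplicative.toAdd x).val + (Multiplicative.toAdd y).val)]
    congr 1
    have : Multiplicative.toAdd (x * y) = Multiplicative.toAdd x + Multiplicative.toAdd y := rfl
    rw [this, ZMod.val_add]
    simp [Nat.mod_mod_of_dvd]


lemma r_cases : ∀ r : Multiplicative (ZMod 2), r ≠ 1 → r = Multiplicative.ofAdd 1 := by decide

lemma hom_at_one (e : MulAut Z2) (he : e * e = 1) :
    involutionHom e he (Multiplicative.ofAdd 1) = e := by
  show e ^ (Multiplicative.toAdd (Multiplicative.ofAdd (1 : ZMod 2))).val = e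
  rw [show (Multiplicative.toAdd (Multiplicative.ofAdd (1 : ZMod 2))).val = 1 from rfl, pow_one]

lemma neg_right (x : Z2 ⋊[involutionHom negAut negAut_sq] Multiplicative (ZMod 2))
    (h : x * x ≠ 1) : x.right = 1 := by
  by_contra hr
  apply h
  have hr' := r_cases _ hr
  ext : 1
  · show x.left * (involutionHom negAut negAut_sq x.right) x.left = 1
    rw [hr', hom_at_one]
    show x.left * Multiplicative.ofAdd (-(Multiplicative.toAdd x.left)) = 1
    simp
  · show x.right * x.right = 1
    rw [hr']; decide

lemma neg_comm (x y : Z2 ⋊[involutionHom negAut negAut_sq] Multiplicative (ZMod 2))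
    (hx : x * x ≠ 1) (hy : y * y ≠ 1) : x * y = y * x := by
  have hxr := neg_right x hx
  have hyr := neg_right y hy
  ext : 1
  · show x.left * (involutionHom negAut negAut_sq x.right) y.left
      = y.left * (involutionHom negAut negAut_sq y.right) x.left
    rw [hxr, hyr, map_one]
    show x.left * y.left = y.left * x.left
    exact mul_comm _ _
  · show x.right * y.right = y.right * x.right
    rw [hxr, hyr]

/-- `ℤ² ⋊_A ℤ/2ℤ` (swap action) is not isomorphic to `ℤ² ⋊_{-id} ℤ/2ℤ`. -/
theorem stmt_6 :
    ¬ Nonempty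
      ((Z2 ⋊[involutionHom swapAut swapAut_sq] Multiplicative (ZMod 2)) ≃*
        (Z2 ⋊[involutionHom negAut negAut_sq] Multiplicative (ZMod 2))) := by
  rintro ⟨e⟩
  set x : Z2 ⋊[involutionHom swapAut swapAut_sq] Multiplicative (ZMod 2) :=
    ⟨Multiplicative.ofAdd (1, 0), 1⟩ with hxdef
  set y : Z2 ⋊[involutionHom swapAut swapAut_sq] Multiplicative (ZMod 2) :=
    ⟨Multiplicative.ofAdd (1, 0), Multiplicative.ofAdd 1⟩ with hydef
  have hx : x * x ≠ 1 := by
    intro h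
    have h2 : (Multiplicative.ofAdd ((1:ℤ), (0:ℤ))) *
        (involutionHom swapAut swapAut_sq (1 : Multiplicative (ZMod 2)))
          (Multiplicative.ofAdd ((1:ℤ), (0:ℤ))) = 1 := congrArg SemidirectProduct.left h
    rw [map_one] at h2
    have h3 : ((2:ℤ), (0:ℤ)) = (0, 0) := congrArg Multiplicative.toAdd h2
    simp at h3
  have hy : y * y ≠ 1 := by
    intro h
    have h2 : (Multiplicative.ofAdd ((1:ℤ), (0:ℤ))) *
        (involutionHom swapAut swapAut_sq (Multiplicative.ofAdd (1 : ZMod 2)))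
          (Multiplicative.ofAdd ((1:ℤ), (0:ℤ))) = 1 := congrArg SemidirectProduct.left h
    rw [hom_at_one] at h2
    have h3 : ((1:ℤ)+(0:ℤ), (0:ℤ)+(1:ℤ)) = ((0:ℤ),(0:ℤ)) := congrArg Multiplicative.toAdd h2
    simp at h3
  have hex : e x * e x ≠ 1 := by
    rw [← map_mul]
    intro h
    exact hx (by simpa using e.injective (h.trans (map_one e).symm))
  have hey : e y * e y ≠ 1 := by
    rw [← map_mul]
    intro h
    exact hy (by simpa using e.injective (h.trans (map_one e).symm))
  have hcomm := neg_comm (e x) (e y) hex hey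
  rw [← map_mul, ← map_mul] at hcomm
  have hxy : x * y = y * x := e.injective hcomm
  have h2 : (Multiplicative.ofAdd ((1:ℤ), (0:ℤ))) *
        (involutionHom swapAut swapAut_sq (1 : Multiplicative (ZMod 2)))
          (Multiplicative.ofAdd ((1:ℤ), (0:ℤ)))
      = (Multiplicative.ofAdd ((1:ℤ), (0:ℤ))) *
        (involutionHom swapAut swapAut_sq (Multiplicative.ofAdd (1 : ZMod 2)))
          (Multiplicative.ofAdd ((1:ℤ), (0:ℤ))) := congrArg SemidirectProduct.left hxy
  rw [map_one, hom_at_one] at h2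
  have h3 : ((1:ℤ)+(1:ℤ), (0:ℤ)+(0:ℤ)) = ((1:ℤ)+(0:ℤ), (0:ℤ)+(1:ℤ)) :=
    congrArg Multiplicative.toAdd h2
  simp at h3
end

section
/- Let f, g be lifts to ℝ of orientation-preserving circle homeomorphisms (i.e., increasing homeomorphisms of ℝ commuting with x ↦ x+1). Suppose f^q(x) = x + p for all x (f is a lift of a finite-order homeomorphism of rotation number p/q), and suppose g satisfies f^q(x) < (g∘f)^q(x) < f^q(x) + 1/q² for all x ∈ ℝ. Then the translation number of g∘f lies in the half-open interval (p/q, p/q + 1/q³]. -/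
theorem stmt_7 (f g : CircleDeg1Lift)
    (hf_cont : Continuous f) (hf_mono : StrictMono f)
    (hg_cont : Continuous g) (hg_mono : StrictMono g)
    (p : ℤ) (q : ℕ) (hp : p ≠ 0) (hq : 1 ≤ q)
    (hfq : ∀ x : ℝ, (f ^ q) x = x + (p : ℝ))
    (hgf : ∀ x : ℝ, (f ^ q) x < ((g * f) ^ q) x ∧
      ((g * f) ^ q) x < (f ^ q) x + 1 / (q : ℝ) ^ 2) :
    (g * f).translationNumber ∈
      Set.Ioc ((p : ℝ) / (q : ℝ)) ((p : ℝ) / (q : ℝ) + 1 / (q : ℝ) ^ 3) := by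
  have hqR : (0 : ℝ) < q := by exact_mod_cast hq
  have hcont : Continuous (g * f) := by
    rw [CircleDeg1Lift.coe_mul]; exact hg_cont.comp hf_cont
  have hcontq : Continuous ((g * f) ^ q : CircleDeg1Lift) :=
    (g * f).continuous_pow hcont q
  have hτq : ((g * f) ^ q).translationNumber = q * (g * f).translationNumber :=
    (g * f).translationNumber_pow q
  have hlow : (p : ℝ) < ((g * f) ^ q).translationNumber := by
    apply CircleDeg1Lift.lt_translationNumber_of_forall_add_lt _ hcontq
    intro x
    have := (hgf x).1
    rw [hfq x] at this
    linarith
  have hhigh : ((g * f) ^ q).translationNumber ≤ (p : ℝ) + 1 / (q : ℝ) ^ 2 := by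
    apply CircleDeg1Lift.translationNumber_le_of_le_add
    intro x
    have := (hgf x).2
    rw [hfq x] at this
    linarith
  rw [hτq] at hlow hhigh
  constructor
  · rw [div_lt_iff₀ hqR]; linarith [hlow]
  · rw [← sub_nonneg]
    have : (p : ℝ) / q + 1 / q ^ 3 - (g * f).translationNumber
        = ((p + 1 / q ^ 2) - q * (g * f).translationNumber) / q := by
      field_simp
    rw [this]
    apply div_nonneg (by linarith) hqR.le
end

section
/- Let G ≤ Homeo₊(S¹) be a subgroup whose action admits an invariant Cantor set Λ, and suppose every non-trivial element of G has at most N fixed points. Then G is discrete in the C⁰ topology: there exists ε > 0 such that every g ∈ G with d_∞(g, id) < ε equals the identity. -/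
open MeasureTheory

lemma aux_coe_int_eq_zero (n : ℤ) : (((n:ℝ)) : S1) = 0 := by
  rw [AddCircle.coe_eq_zero_iff]
  exact ⟨n, by simp⟩

lemma aux_coe_sub_int (u : ℝ) (n : ℤ) : ((u - n : ℝ) : S1) = (u : S1) := by
  have h : ((u - n : ℝ) : S1) = (u:S1) - ((n:ℝ):S1) := rfl
  rw [h, aux_coe_int_eq_zero, sub_zero]

lemma aux_dist_coe (u v : ℝ) : dist ((u:ℝ):S1) ((v:ℝ):S1) = |(u - v) - round (u - v)| := by
  rw [dist_eq_norm]
  have h : ((u:ℝ):S1) - ((v:ℝ):S1) = ((u - v : ℝ) : S1) := rfl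
  rw [h, AddCircle.norm_eq]
  norm_num

lemma aux_key_lift (g : S1 ≃ₜ S1) (hg : OrientationPreserving g) (ε : ℝ)
    (hε2 : ε < 1/2) (hd : ∀ z : S1, dist (g z) z < ε) :
    ∃ F : ℝ → ℝ, StrictMono F ∧ Function.Surjective F ∧
      (∀ x : ℝ, g (x : S1) = ((F x : ℝ) : S1)) ∧ (∀ x : ℝ, |F x - x| < ε) := by
  obtain ⟨F, hmono, hper, hlift⟩ := hg
  have hperiodic : Function.Periodic (fun x => F x - x) 1 := by
    intro x; simp [hper x]
  have hint : ∀ (x : ℝ) (n : ℤ), F (x - n) = F x - n := by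
    intro x n
    have := hperiodic.sub_int_mul_eq (x := x) n
    simp only [mul_one] at this
    linarith
  have hsurj : Function.Surjective F := by
    intro y
    obtain ⟨s, hs⟩ := g.toEquiv.surjective ((y:ℝ) : S1)
    obtain ⟨x, rfl⟩ := QuotientAddGroup.mk_surjective s
    have hs' : g (x : S1) = ((y:ℝ) : S1) := hs
    rw [hlift] at hs'
    have h0 : ((F x - y : ℝ) : S1) = 0 := by
      have h : ((F x - y : ℝ):S1) = ((F x : ℝ):S1) - ((y:ℝ):S1) := rfl
      rw [h, hs', sub_self]
    rw [AddCircle.coe_eq_zero_iff] at h0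
    obtain ⟨n, hn⟩ := h0
    refine ⟨x - n, ?_⟩
    rw [hint x n]
    have : (n : ℝ) = F x - y := by simpa using hn
    linarith
  have hcF : Continuous F := hmono.monotone.continuous_of_surjective hsurj
  set h : ℝ → ℝ := fun x => F x - x with hh
  have hch : Continuous h := hcF.sub continuous_id
  have hb : ∀ x, |h x - round (h x)| < ε := by
    intro x
    have := hd ((x:ℝ) : S1)
    rw [hlift, aux_dist_coe] at this
    simpa [hh] using this
  have hK : IsLocallyConstant (fun x => round (h x)) := by
    rw [IsLocallyConstant.iff_eventually_eq]
    intro x₀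
    have hε : 0 < ε := lt_of_le_of_lt (abs_nonneg _) (hb x₀)
    have hpos : (0:ℝ) < 1 - 2*ε := by linarith
    have hev : ∀ᶠ y in nhds x₀, h y ∈ Metric.ball (h x₀) (1 - 2*ε) :=
      (hch.continuousAt).preimage_mem_nhds (Metric.ball_mem_nhds _ hpos)
    filter_upwards [hev] with y hy
    have h1 := hb y
    have h2 := hb x₀
    rw [Metric.mem_ball, Real.dist_eq] at hy
    have habs : |((round (h y) : ℝ)) - ((round (h x₀) : ℝ))| < 1 := by
      calc |((round (h y) : ℝ)) - (round (h x₀) : ℝ)|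
          ≤ |(round (h y) : ℝ) - h y| + |h y - (round (h x₀):ℝ)| := abs_sub_le _ _ _
        _ ≤ |(round (h y) : ℝ) - h y| + (|h y - h x₀| + |h x₀ - (round (h x₀):ℝ)|) := by
            gcongr; exact abs_sub_le _ _ _
        _ < ε + ((1 - 2*ε) + ε) := by rw [abs_sub_comm] at h1; gcongr
        _ = 1 := by ring
    have hZ : |round (h y) - round (h x₀)| < 1 := by
      have : |((round (h y) - round (h x₀) : ℤ) : ℝ)| < 1 := by push_cast; exact habs
      exact_mod_cast this
    have := abs_lt.mp hZ
    omega
  have hKc : ∀ x, round (h x) = round (h 0) := fun x =>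
    hK.apply_eq_of_isPreconnected isPreconnected_univ (Set.mem_univ x) (Set.mem_univ 0)
  refine ⟨fun x => F x - round (h 0), fun p q hpq => by simpa using hmono hpq, ?_, ?_, ?_⟩
  · intro y
    obtain ⟨x, hx⟩ := hsurj (y + round (h 0))
    refine ⟨x, ?_⟩
    dsimp only
    rw [hx]; ring
  · intro x
    rw [hlift]
    exact (aux_coe_sub_int (F x) (round (h 0))).symm
  · intro x
    have hx := hb x
    rw [hKc x] at hx
    have heq : F x - (round (h 0) : ℝ) - x = h x - round (h 0) := by simp [hh]; ring
    rw [heq]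
    exact hx

lemma aux_lambda_infinite (Λ : Set S1) (hne : Λ.Nonempty) (hperf : Perfect Λ) :
    Λ.Infinite := by
  intro hfin
  obtain ⟨x, hx⟩ := hne
  have hacc := hperf.acc x hx
  rw [accPt_iff_nhds] at hacc
  have hcl : IsClosed (Λ \ {x}) := (hfin.diff : (Λ \ {x}).Finite).isClosed
  have hU : (Λ \ {x})ᶜ ∈ nhds x := hcl.isOpen_compl.mem_nhds (by simp)
  obtain ⟨y, ⟨hyU, hyΛ⟩, hyx⟩ := hacc _ hU
  exact hyU ⟨hyΛ, hyx⟩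

lemma aux_pi_continuous : Continuous (fun x : ℝ => (x : S1)) := continuous_quotient_mk'

lemma aux_pi_open : IsOpenMap (fun x : ℝ => (x : S1)) := QuotientAddGroup.isOpenMap_coe

lemma aux_rep_spec (z : S1) :
    ((((AddCircle.equivIco 1 0 z) : Set.Ico (0:ℝ) (0+1)) : ℝ) : S1) = z :=
  (AddCircle.equivIco 1 0).symm_apply_apply z

theorem stmt_18 (G : Subgroup (S1 ≃ₜ S1))
    (hOP : ∀ g ∈ G, OrientationPreserving g)
    (N : ℕ) (hfix : ∀ g ∈ G, g ≠ 1 → {z : S1 | g z = z}.encard ≤ (N : ℕ∞))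
    (Λ : Set S1) (hne : Λ.Nonempty) (hperf : Perfect Λ) (hint : interior Λ = ∅)
    (hinvΛ : ∀ g ∈ G, ⇑g '' Λ = Λ) :
    ∃ ε > 0, ∀ g ∈ G, (∀ z : S1, dist (g z) z < ε) → g = 1 := by
  classical
  set pr : ℝ → S1 := fun x : ℝ => (x : S1) with hpr
  set Λ' : Set ℝ := pr ⁻¹' Λ with hΛ'
  have hΛ'closed : IsClosed Λ' := hperf.closed.preimage aux_pi_continuous
  have hΛinf := aux_lambda_infinite Λ hne hperf
  obtain ⟨T, hTsub, hTfin, hTcard⟩ := hΛinf.exists_subset_ncard_eq (N+2)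
  set ρ : S1 → ℝ := fun z => ((AddCircle.equivIco 1 0 z : Set.Ico (0:ℝ) (0+1)) : ℝ) with hρ
  have hρinj : Function.Injective ρ := by
    intro u v huv
    have := congrArg pr huv
    simpa [hpr, hρ, aux_rep_spec] using this
  set S : Finset ℝ := (hTfin.image ρ).toFinset with hS
  have hScard : S.card = N + 2 := by
    rw [hS, ← Set.ncard_eq_toFinset_card _ (hTfin.image ρ), Set.ncard_image_of_injective _ hρinj, hTcard]
  have hSmem : ∀ r ∈ S, r ∈ Λ' ∧ r ∈ Set.Ico (0:ℝ) 1 := by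
    intro r hr
    rw [hS, Set.Finite.mem_toFinset] at hr
    obtain ⟨z, hz, rfl⟩ := hr
    refine ⟨?_, ?_⟩
    · show pr (ρ z) ∈ Λ
      have : pr (ρ z) = z := aux_rep_spec z
      rw [this]
      exact hTsub hz
    · have := (AddCircle.equivIco 1 0 z).2
      simpa [hρ] using this
  set x : Fin (N+2) → ℝ := fun i => S.orderEmbOfFin hScard i with hx
  have hxmono : StrictMono x := (S.orderEmbOfFin hScard).strictMono
  have hxmem : ∀ i, x i ∈ Λ' ∧ x i ∈ Set.Ico (0:ℝ) 1 :=
    fun i => hSmem _ (S.orderEmbOfFin_mem hScard i)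
  have gapex : ∀ i : Fin (N+1), ∃ p q : ℝ, p ∈ Λ' ∧ q ∈ Λ' ∧
      x i.castSucc ≤ p ∧ p < q ∧ q ≤ x i.succ ∧ ∀ t ∈ Λ', t ∉ Set.Ioo p q := by
    intro i
    have hlt : x i.castSucc < x i.succ := hxmono (Fin.castSucc_lt_succ : i.castSucc < i.succ)
    have hy : ∃ y ∈ Set.Ioo (x i.castSucc) (x i.succ), y ∉ Λ' := by
      by_contra hcon
      push_neg at hcon
      have hopen : IsOpen (pr '' Set.Ioo (x i.castSucc) (x i.succ)) :=
        aux_pi_open _ isOpen_Ioo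
      have hsubΛ : pr '' Set.Ioo (x i.castSucc) (x i.succ) ⊆ Λ := by
        rintro _ ⟨t, ht, rfl⟩
        exact hcon t ht
      have hsubint : pr '' Set.Ioo (x i.castSucc) (x i.succ) ⊆ interior Λ :=
        interior_maximal hsubΛ hopen
      rw [hint] at hsubint
      exact (hsubint ⟨(x i.castSucc + x i.succ)/2, ⟨by linarith, by linarith⟩, rfl⟩)
    obtain ⟨y, hyIoo, hyΛ⟩ := hy
    have hAne : (Λ' ∩ Set.Iic y).Nonempty := ⟨x i.castSucc, (hxmem _).1, le_of_lt hyIoo.1⟩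
    have hAbdd : BddAbove (Λ' ∩ Set.Iic y) := ⟨y, fun t ht => ht.2⟩
    have haA := (hΛ'closed.inter isClosed_Iic).csSup_mem hAne hAbdd
    have hBne : (Λ' ∩ Set.Ici y).Nonempty := ⟨x i.succ, (hxmem _).1, le_of_lt hyIoo.2⟩
    have hBbdd : BddBelow (Λ' ∩ Set.Ici y) := ⟨y, fun t ht => ht.2⟩
    have hbB := (hΛ'closed.inter isClosed_Ici).csInf_mem hBne hBbdd
    set p := sSup (Λ' ∩ Set.Iic y) with hp
    set q := sInf (Λ' ∩ Set.Ici y) with hq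
    have hpy : p ≤ y := csSup_le hAne (fun t ht => ht.2)
    have hpy' : p < y := lt_of_le_of_ne hpy (fun h => hyΛ (h ▸ haA.1))
    have hyq : y ≤ q := le_csInf hBne (fun t ht => ht.2)
    have hyq' : y < q := lt_of_le_of_ne hyq (fun h => hyΛ (h ▸ hbB.1))
    refine ⟨p, q, haA.1, hbB.1,
      le_csSup hAbdd ⟨(hxmem _).1, le_of_lt hyIoo.1⟩,
      lt_trans hpy' hyq',
      csInf_le hBbdd ⟨(hxmem _).1, le_of_lt hyIoo.2⟩, ?_⟩
    intro t ht hts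
    rcases le_or_gt t y with h | h
    · have := le_csSup hAbdd (⟨ht, h⟩ : t ∈ Λ' ∩ Set.Iic y)
      exact absurd hts.1 (not_lt.mpr this)
    · have := csInf_le hBbdd (⟨ht, le_of_lt h⟩ : t ∈ Λ' ∩ Set.Ici y)
      exact absurd hts.2 (not_lt.mpr this)
  choose a b haΛ hbΛ hxa hab hbx hgap using gapex
  have hFinNE : (Finset.univ : Finset (Fin (N+1))).Nonempty := Finset.univ_nonempty
  set δ : ℝ := Finset.univ.inf' hFinNE (fun i => b i - a i) with hδ
  set ε : ℝ := min (1/4 : ℝ) δ with hε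
  have hδpos : 0 < δ := by
    rw [hδ, Finset.lt_inf'_iff]
    exact fun i _ => sub_pos.mpr (hab i)
  have hεpos : 0 < ε := lt_min (by norm_num) hδpos
  have hεδ : ∀ i, ε ≤ b i - a i := fun i =>
    le_trans (min_le_right _ _) (Finset.inf'_le _ (Finset.mem_univ i))
  refine ⟨ε, hεpos, ?_⟩
  intro g hgG hd
  by_contra hg1
  obtain ⟨F, hFmono, hFsurj, hFlift, hFclose⟩ :=
    aux_key_lift g (hOP g hgG) ε (lt_of_le_of_lt (min_le_left _ _) (by norm_num)) hd
  have hmemiff : ∀ t : ℝ, t ∈ Λ' ↔ F t ∈ Λ' := by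
    intro t
    have h1 : ((F t : ℝ) : S1) = g ((t:ℝ) : S1) := (hFlift t).symm
    show pr t ∈ Λ ↔ pr (F t) ∈ Λ
    have h2 : pr (F t) = g (pr t) := h1
    rw [h2]
    constructor
    · intro h
      rw [← hinvΛ g hgG]
      exact ⟨_, h, rfl⟩
    · intro h
      rw [← hinvΛ g hgG] at h
      obtain ⟨w, hw, hwz⟩ := h
      rwa [← g.toEquiv.injective hwz]
  have hfixa : ∀ i, F (a i) = a i := by
    intro i
    have h1 : F (a i) ≤ a i := by
      by_contra hcon
      push_neg at hcon
      refine hgap i (F (a i)) ((hmemiff (a i)).mp (haΛ i)) ⟨hcon, ?_⟩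
      have := (abs_lt.mp (hFclose (a i))).2
      linarith [hεδ i]
    obtain ⟨c, hc⟩ := hFsurj (a i)
    have hcΛ : c ∈ Λ' := (hmemiff c).mpr (by rw [hc]; exact haΛ i)
    have h2 : c ≤ a i := by
      by_contra hcon
      push_neg at hcon
      refine hgap i c hcΛ ⟨hcon, ?_⟩
      have h3 := (abs_lt.mp (hFclose c)).1
      rw [hc] at h3
      linarith [hεδ i]
    have h4 := hFmono.monotone h2
    rw [hc] at h4
    exact le_antisymm h1 h4
  have hamono : StrictMono a := by
    intro i j hij
    have hij' : i.succ ≤ j.castSucc := by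
      rw [Fin.le_def]
      simp only [Fin.val_succ, Fin.coe_castSucc]
      exact hij
    calc a i < b i := hab i
      _ ≤ x i.succ := hbx i
      _ ≤ x j.castSucc := hxmono.monotone hij'
      _ ≤ a j := hxa j
  have haIco : ∀ i, a i ∈ Set.Ico (0:ℝ) (0+1) := by
    intro i
    constructor
    · have := (hxmem i.castSucc).2.1
      linarith [hxa i]
    · have := (hxmem i.succ).2.2
      have h1 := hbx i
      have h2 := hab i
      linarith
  have hinj : Function.Injective (fun i : Fin (N+1) => ((a i : ℝ) : S1)) := by
    intro i j hij
    rw [AddCircle.coe_eq_coe_iff_of_mem_Ico (haIco i) (haIco j)] at hij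
    exact hamono.injective hij
  have hsubfix : Set.range (fun i : Fin (N+1) => ((a i : ℝ) : S1)) ⊆ {z : S1 | g z = z} := by
    rintro _ ⟨i, rfl⟩
    show g _ = _
    rw [hFlift (a i), hfixa i]
  have hcard : ((N+1 : ℕ) : ℕ∞) ≤ {z : S1 | g z = z}.encard := by
    have h1 : (Set.range fun i : Fin (N+1) => ((a i : ℝ):S1)).encard = ((N+1 : ℕ) : ℕ∞) := by
      rw [← Set.image_univ, Set.InjOn.encard_image (hinj.injOn), Set.encard_univ]
      simp
    rw [← h1]
    exact Set.encard_mono hsubfix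
  have hle := hfix g hgG hg1
  have h2 : ((N+1 : ℕ) : ℕ∞) ≤ (N : ℕ∞) := le_trans hcard hle
  have h3 : N + 1 ≤ N := by exact_mod_cast h2
  omega
end

section
/- Let f be an orientation-preserving circle homeomorphism of finite order q ≥ 2 with rotation number p/q (p, q nonzero integers), and let ε > 0. Then there exists δ > 0 such that for every positive circle homeomorphism g with d_∞(g, id) < δ, the rotation number of g∘f lies in the half-open interval (p/q, p/q + 1/q³] (in particular rot(g∘f) ≠ p/q), and d_{C⁰}(f, g∘f) < ε. -/
/-- Modulus of continuity for a continuous `CircleDeg1Lift`: it is uniformly continuous. -/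
lemma stmt19_mod (h : CircleDeg1Lift) (hc : Continuous ⇑h) {s : ℝ} (hs : 0 < s) :
    ∃ θ, 0 < θ ∧ θ ≤ s ∧ ∀ x y : ℝ, |y - x| ≤ θ → |h y - h x| ≤ s := by
  have hUC : UniformContinuousOn ⇑h (Set.Icc (-1 : ℝ) 2) :=
    isCompact_Icc.uniformContinuousOn_of_continuous hc.continuousOn
  rw [Metric.uniformContinuousOn_iff] at hUC
  obtain ⟨θ0, hθ0, hθ⟩ := hUC s hs
  refine ⟨min (θ0 / 2) (min 1 s), by positivity,
    (min_le_right _ _).trans (min_le_right _ _), ?_⟩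
  intro x y hxy
  have hxy1 : |y - x| ≤ 1 := hxy.trans ((min_le_right _ _).trans (min_le_left _ _))
  have hxyθ : |y - x| < θ0 := lt_of_le_of_lt (hxy.trans (min_le_left _ _)) (by linarith)
  set n : ℤ := ⌊x⌋ with hn
  have hfr0 : (0:ℝ) ≤ x - n := by
    have := Int.floor_le x; linarith
  have hfr1 : x - n ≤ 1 := by
    have := Int.lt_floor_add_one x; linarith
  have hx' : x - (n:ℝ) ∈ Set.Icc (-1 : ℝ) 2 := ⟨by linarith, by linarith⟩
  have hy' : y - (n:ℝ) ∈ Set.Icc (-1 : ℝ) 2 := by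
    have h1 := abs_le.1 hxy1
    constructor <;> [linarith [h1.1]; linarith [h1.2]]
  have hd : dist (y - (n:ℝ)) (x - (n:ℝ)) < θ0 := by
    rw [Real.dist_eq]
    simpa using hxyθ
  have := hθ _ hy' _ hx' hd
  rw [Real.dist_eq, h.map_sub_int, h.map_sub_int] at this
  have : |h y - h x| < s := by simpa using this
  exact this.le

/-- Lemma about perturbing a finite-order circle homeomorphism by a small positive
homeomorphism, stated in terms of lifts (units of `CircleDeg1Lift`). -/
theorem stmt_19 (f : CircleDeg1Liftˣ) (p : ℤ) (q : ℕ) (hp : p ≠ 0) (hq : 2 ≤ q)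
    (hf_cont : Continuous ⇑(f : CircleDeg1Lift))
    (hf_order : ∀ x : ℝ, ((f : CircleDeg1Lift) ^ q) x = x + (p : ℝ))
    (ε : ℝ) (hε : 0 < ε) :
    ∃ δ > 0, ∀ g : CircleDeg1Liftˣ, Continuous ⇑(g : CircleDeg1Lift) →
      (∀ x : ℝ, x < (g : CircleDeg1Lift) x ∧ (g : CircleDeg1Lift) x < x + 1 / 2) →
      (∀ x : ℝ, |(g : CircleDeg1Lift) x - x| < δ) →
      (((g * f : CircleDeg1Liftˣ) : CircleDeg1Lift).translationNumber ∈
        Set.Ioc ((p : ℝ) / (q : ℝ)) ((p : ℝ) / (q : ℝ) + 1 / (q : ℝ) ^ 3)) ∧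
      (∀ x : ℝ,
        |((g * f : CircleDeg1Liftˣ) : CircleDeg1Lift) x - (f : CircleDeg1Lift) x| +
          |(((g * f)⁻¹ : CircleDeg1Liftˣ) : CircleDeg1Lift) x -
            ((f⁻¹ : CircleDeg1Liftˣ) : CircleDeg1Lift) x| < ε) := by
  have hq0 : 0 < q := lt_of_lt_of_le two_pos hq
  have hqR : (0:ℝ) < q := Nat.cast_pos.2 hq0
  set F : ℝ → ℝ := ⇑(f : CircleDeg1Lift) with hF
  have hFq : ∀ x, F^[q] x = x + (p:ℝ) := by
    intro x
    have := hf_order x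
    rwa [CircleDeg1Lift.coe_pow] at this
  have hFmono : Monotone F := (f : CircleDeg1Lift).monotone
  obtain ⟨m, hm⟩ : ∃ m, q = m + 1 := ⟨q - 1, by omega⟩
  -- formula and continuity for the inverse of f
  have hfi : ⇑((f⁻¹ : CircleDeg1Liftˣ) : CircleDeg1Lift) = fun x => F^[m] x - p := by
    funext x
    have h1 : F (F^[m] x) = x + (p:ℝ) := by
      rw [← Function.iterate_succ_apply' F m x, Nat.succ_eq_add_one, ← hm]
      exact hFq x
    have h2 : ((f⁻¹ : CircleDeg1Liftˣ) : CircleDeg1Lift) (x + (p:ℝ)) = F^[m] x := by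
      rw [← h1]
      exact CircleDeg1Lift.units_inv_apply_apply f _
    have h3 : ((f⁻¹ : CircleDeg1Liftˣ) : CircleDeg1Lift) (x + (p:ℝ))
        = ((f⁻¹ : CircleDeg1Liftˣ) : CircleDeg1Lift) x + (p:ℝ) :=
      ((f⁻¹ : CircleDeg1Liftˣ) : CircleDeg1Lift).map_add_int x p
    simp only [h2] at h3
    linarith [h3]
  have hfi_cont : Continuous ⇑((f⁻¹ : CircleDeg1Liftˣ) : CircleDeg1Lift) := by
    rw [hfi]
    exact (hf_cont.iterate _).sub continuous_const
  -- modulus of continuity machinery for F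
  have hmodF : ∀ s : ℝ, 0 < s →
      ∃ θ, 0 < θ ∧ θ ≤ s / 2 ∧ ∀ x y : ℝ, |y - x| ≤ θ → |F y - F x| ≤ s / 2 :=
    fun s hs => stmt19_mod _ hf_cont (half_pos hs)
  classical
  set Θ : ℝ → ℝ := fun s => if hs : 0 < s then (hmodF s hs).choose else 1 with hΘdef
  have hΘ : ∀ s, 0 < s → 0 < Θ s ∧ Θ s ≤ s/2 ∧
      ∀ x y, |y - x| ≤ Θ s → |F y - F x| ≤ s/2 := by
    intro s hs
    simp only [hΘdef, dif_pos hs]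
    exact (hmodF s hs).choose_spec
  set u : ℕ → ℝ := fun n => Θ^[n] (1 / (q:ℝ)^2) with hudef
  have hu0 : u 0 = 1/(q:ℝ)^2 := rfl
  have husucc : ∀ n, u (n+1) = Θ (u n) := fun n => Function.iterate_succ_apply' Θ n _
  have hupos : ∀ n, 0 < u n := by
    intro n
    induction n with
    | zero => rw [hu0]; positivity
    | succ n ih => rw [husucc]; exact (hΘ _ ih).1
  have huhalf : ∀ n, u (n+1) ≤ u n / 2 := fun n => by
    rw [husucc]; exact (hΘ _ (hupos n)).2.1
  have humod : ∀ n x y, |y - x| ≤ u (n+1) → |F y - F x| ≤ u n / 2 := by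
    intro n x y h
    rw [husucc] at h
    exact (hΘ _ (hupos n)).2.2 x y h
  have huanti : Antitone u := antitone_nat_of_succ_le fun n =>
    (huhalf n).trans (by linarith [hupos n])
  -- modulus for f⁻¹ at scale ε/3
  obtain ⟨θε, hθεpos, -, hθε⟩ := stmt19_mod _ hfi_cont (show (0:ℝ) < ε/3 by linarith)
  refine ⟨min (min (u q) θε) (ε/3), lt_min (lt_min (hupos q) hθεpos) (by linarith), ?_⟩
  intro g hg_cont hg_pos hg_close
  set δ : ℝ := min (min (u q) θε) (ε/3) with hδdef
  set G : ℝ → ℝ := ⇑(g : CircleDeg1Lift) with hG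
  have hGgt : ∀ x, x < G x := fun x => (hg_pos x).1
  have hGu : ∀ x, G x < x + u q := by
    intro x
    have h1 := (abs_lt.1 (hg_close x)).2
    have h2 : δ ≤ u q := (min_le_left _ _).trans (min_le_left _ _)
    linarith
  set H : ℝ → ℝ := ⇑((g * f : CircleDeg1Liftˣ) : CircleDeg1Lift) with hH
  have hHGF : ∀ x, H x = G (F x) := by
    intro x
    rw [hH, Units.val_mul, CircleDeg1Lift.mul_apply]
  have hH_cont : Continuous H := by
    have : H = G ∘ F := funext hHGF
    rw [this]
    exact hg_cont.comp hf_cont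
  -- key induction
  have key : ∀ k, k ≤ q → ∀ x, F^[k] x ≤ H^[k] x ∧ H^[k] x ≤ F^[k] x + u (q - k) := by
    intro k
    induction k with
    | zero =>
      intro _ x
      simp only [Function.iterate_zero_apply, Nat.sub_zero]
      exact ⟨le_rfl, by linarith [hupos q]⟩
    | succ k ih =>
      intro hk x
      have hk' : k ≤ q := le_of_lt (Nat.lt_of_succ_le hk)
      obtain ⟨h1, h2⟩ := ih hk' x
      have hqk : q - k = (q - (k+1)) + 1 := by omega
      have hFwv : F (F^[k] x) ≤ F (H^[k] x) := hFmono h1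
      have hstep : |F (H^[k] x) - F (F^[k] x)| ≤ u (q - (k+1)) / 2 := by
        apply humod
        rw [← hqk, abs_le]
        constructor <;> linarith
      have habs := (abs_le.1 hstep).2
      have huq : u q ≤ u (q - (k+1)) / 2 := by
        have hle : u q ≤ u ((q - (k+1)) + 1) := huanti (by omega)
        exact hle.trans (huhalf _)
      constructor
      · rw [Function.iterate_succ_apply' F, Function.iterate_succ_apply' H, hHGF]
        exact hFwv.trans (le_of_lt (hGgt (F (H^[k] x))))
      · rw [Function.iterate_succ_apply' F, Function.iterate_succ_apply' H, hHGF]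
        have := hGu (F (H^[k] x))
        linarith
  -- strict lower bound
  have hstrict : ∀ x, x + (p:ℝ) < H^[q] x := by
    intro x
    have h1 := (key m (by omega) x).1
    have h2 : F^[q] x < H^[q] x := by
      rw [hm, Function.iterate_succ_apply' F, Function.iterate_succ_apply' H, hHGF]
      exact lt_of_le_of_lt (hFmono h1) (hGgt _)
    rwa [hFq x] at h2
  have hupper : ∀ x, H^[q] x ≤ x + ((p:ℝ) + 1/(q:ℝ)^2) := by
    intro x
    have h2 := (key q le_rfl x).2
    rw [Nat.sub_self, hFq x, hu0] at h2
    linarith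
  -- translation number bounds
  have hcoeq : ⇑(((g * f : CircleDeg1Liftˣ) : CircleDeg1Lift) ^ q) = H^[q] :=
    CircleDeg1Lift.coe_pow _ q
  set τ : ℝ := ((g * f : CircleDeg1Liftˣ) : CircleDeg1Lift).translationNumber with hτ
  have hτpow : (((g * f : CircleDeg1Liftˣ) : CircleDeg1Lift) ^ q).translationNumber
      = (q : ℝ) * τ := CircleDeg1Lift.translationNumber_pow _ q
  have hτlow : (p:ℝ) < (q:ℝ) * τ := by
    rw [← hτpow]
    apply CircleDeg1Lift.lt_translationNumber_of_forall_add_lt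
    · exact ((g * f : CircleDeg1Liftˣ) : CircleDeg1Lift).continuous_pow hH_cont q
    · intro x
      rw [hcoeq]
      exact hstrict x
  have hτhigh : (q:ℝ) * τ ≤ (p:ℝ) + 1/(q:ℝ)^2 := by
    rw [← hτpow]
    apply CircleDeg1Lift.translationNumber_le_of_le_add
    intro x
    rw [hcoeq]
    exact hupper x
  constructor
  · constructor
    · rw [div_lt_iff₀ hqR]
      linarith [hτlow]
    · rw [← sub_nonneg]
      have h3 : (p:ℝ)/q + 1/(q:ℝ)^3 - τ = (((p:ℝ) + 1/(q:ℝ)^2) - (q:ℝ) * τ) / q := by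
        field_simp
      rw [h3]
      apply div_nonneg _ hqR.le
      linarith
  · intro x
    have hterm1 : |H x - F x| < ε/3 := by
      have h1 : |G (F x) - F x| < δ := hg_close (F x)
      rw [hHGF]
      exact lt_of_lt_of_le h1 (min_le_right _ _)
    have hginvx : |(((g⁻¹ : CircleDeg1Liftˣ) : CircleDeg1Lift)) x - x| < δ := by
      have h1 := hg_close (((g⁻¹ : CircleDeg1Liftˣ) : CircleDeg1Lift) x)
      rw [show G (((g⁻¹ : CircleDeg1Liftˣ) : CircleDeg1Lift) x) = x from
        CircleDeg1Lift.units_apply_inv_apply g x, abs_sub_comm] at h1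
      exact h1
    have hinv : (((g * f)⁻¹ : CircleDeg1Liftˣ) : CircleDeg1Lift) x
        = ((f⁻¹ : CircleDeg1Liftˣ) : CircleDeg1Lift)
          (((g⁻¹ : CircleDeg1Liftˣ) : CircleDeg1Lift) x) := by
      rw [mul_inv_rev, Units.val_mul, CircleDeg1Lift.mul_apply]
    have hterm2 : |(((g * f)⁻¹ : CircleDeg1Liftˣ) : CircleDeg1Lift) x
        - ((f⁻¹ : CircleDeg1Liftˣ) : CircleDeg1Lift) x| ≤ ε/3 := by
      rw [hinv]
      apply hθε
      have hδθ : δ ≤ θε := (min_le_left _ _).trans (min_le_right _ _)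
      linarith [hginvx]
    linarith [hterm1, hterm2]
end
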